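/- arXiv:2505.09400 — 2 statements merged into one kernel-verified Lean document; each statement's English description precedes it below -/
import Mathlib

section
/- Let u(t,·) : ℕ₀^d \ {0} → ℝ₊ solve the discrete coagulation system ∂_t u_i(t,n) = α_i((1/2)(u_i ⋆ u_i)(t,n) − ⟨u_i(t),1⟩ u_i(t,n)) + Σ_{j≠i}(w_{j,i}u_j(t,n) − w_{i,j}u_i(t,n)) with u_i(0,n) = cβ_i δ_{e_i,n}, where (u⋆u)(n) = Σ_{n₁+n₂=n} u(n₁)u(n₂). Assume all sums converge absolutely. Then for λ ∈ [0,1]^d, the generating-function quantities v_i(t,λ) := (1 − ⟨u_i(t),1⟩/(c β_i)) + (1/(cβ_i)) Σ_n u_i(t,n) λ^n satisfy ∂_t v_i = c α_i β_i ((1/2)v_i² + 1/2 − v_i) + Σ_{j≠i}((β_j/β_i) w_{j,i} v_j − w_{i,j} v_i) − Σ_{j≠i}((β_j/β_i) w_{j,i} − w_{i,j}), with v_i(0,λ) = λ_i. -/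
/-- Right-hand side of the discrete multi-dimensional coagulation equation:
`αᵢ((1/2)(uᵢ⋆uᵢ)(n) - ⟨uᵢ,1⟩uᵢ(n)) + Σ_{j≠i}(w_{j,i}uⱼ(n) - w_{i,j}uᵢ(n))`,
where `(u⋆u)(n) = Σ_{n₁+n₂=n} u(n₁)u(n₂)` (here `u(0) = 0` by convention). -/
noncomputable def coagRHS (d : ℕ) (α : Fin d → ℝ) (w : Fin d → Fin d → ℝ)
    (u : ℝ → Fin d → (Fin d → ℕ) → ℝ) (t : ℝ) (i : Fin d) (n : Fin d → ℕ) : ℝ :=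
  α i * ((1 / 2) * ∑ m ∈ Finset.Iic n, u t i m * u t i (n - m)
      - (∑' k : Fin d → ℕ, u t i k) * u t i n)
    + ∑ j ∈ Finset.univ.erase i, (w j i * u t j n - w i j * u t i n)

/-- The generating-function quantity
`vᵢ(t,λ) = (1 - ⟨uᵢ(t),1⟩/(cβᵢ)) + (1/(cβᵢ)) Σₙ uᵢ(t,n) λ^n`. -/
noncomputable def genV (d : ℕ) (c : ℝ) (β : Fin d → ℝ) (lam : Fin d → ℝ)
    (u : ℝ → Fin d → (Fin d → ℕ) → ℝ) (t : ℝ) (i : Fin d) : ℝ :=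
  (1 - (∑' n : Fin d → ℕ, u t i n) / (c * β i))
    + (1 / (c * β i)) * ∑' n : Fin d → ℕ, u t i n * ∏ k, lam k ^ n k


/-!
Multiplying the equation for `uᵢ(n)` by `λⁿ` and summing over `n`, the convolution term becomes
the square of `Gᵢ = Σₙ uᵢ(n) λⁿ` (a Cauchy product over `ℕ^d`, justified by absolute
summability since `|λⁿ| ≤ 1`), so
`Gᵢ' = αᵢ(½Gᵢ² - SᵢGᵢ) + Σⱼ (wⱼᵢGⱼ - wᵢⱼGᵢ)`, where the mass `Sᵢ` is `Gᵢ` at `λ = 1`.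
Subtracting the two instances, `Dᵢ = Gᵢ - Sᵢ` satisfies `Dᵢ' = ½αᵢDᵢ² + Σⱼ (wⱼᵢDⱼ - wᵢⱼDᵢ)`, and
`vᵢ = 1 + Dᵢ/(cβᵢ)` turns this into the stated system because `½v² + ½ - v = ½(v - 1)²`.
At `t = 0` only `n = eᵢ` contributes, giving `Sᵢ = cβᵢ` and `Gᵢ = cβᵢλᵢ`.
-/

open Finset

section CauchyProduct

variable {A : Type*} [AddCommMonoid A] [PartialOrder A] [CanonicallyOrderedAdd A] [Sub A]
  [OrderedSub A] [AddLeftReflectLE A] [LocallyFiniteOrderBot A] [DecidableEq A]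

attribute [local instance] Finset.HasAntidiagonal.antidiagonalOfLocallyFinite

theorem sum_antidiagonal_eq_sum_Iic {M : Type*} [AddCommMonoid M] (n : A) (F : A → A → M) :
    ∑ kl ∈ antidiagonal n, F kl.1 kl.2 = ∑ m ∈ Iic n, F m (n - m) := by
  refine sum_nbij' Prod.fst (fun m => (m, n - m)) (fun kl hkl => ?_) (fun m hm => ?_)
    (fun kl hkl => ?_) (fun _ _ => rfl) (fun kl hkl => ?_)
  · rw [HasAntidiagonal.mem_antidiagonal] at hkl
    exact mem_Iic.mpr (hkl ▸ le_self_add)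
  · exact HasAntidiagonal.mem_antidiagonal.mpr (add_tsub_cancel_of_le (mem_Iic.mp hm))
  all_goals
    rw [HasAntidiagonal.mem_antidiagonal] at hkl
    rw [← hkl, add_tsub_cancel_left]

variable {R : Type*} [NormedRing R] {f g : A → R}

theorem sum_Iic_mul_eq_sum_antidiagonal :
    (fun n => ∑ m ∈ Iic n, f m * g (n - m)) = fun n => ∑ kl ∈ antidiagonal n, f kl.1 * g kl.2 :=
  funext fun n => (sum_antidiagonal_eq_sum_Iic n fun a b => f a * g b).symm

variable [CompleteSpace R]

theorem summable_sum_Iic_mul_of_summable_norm (hf : Summable (‖f ·‖)) (hg : Summable (‖g ·‖)) :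
    Summable fun n => ∑ m ∈ Iic n, f m * g (n - m) := by
  rw [sum_Iic_mul_eq_sum_antidiagonal]
  exact summable_sum_mul_antidiagonal_of_summable_mul (summable_mul_of_summable_norm hf hg)

theorem tsum_mul_tsum_eq_tsum_sum_Iic_of_summable_norm (hf : Summable (‖f ·‖))
    (hg : Summable (‖g ·‖)) :
    (∑' n, f n) * (∑' n, g n) = ∑' n, ∑ m ∈ Iic n, f m * g (n - m) := by
  rw [sum_Iic_mul_eq_sum_antidiagonal]
  exact hf.of_norm.tsum_mul_tsum_eq_tsum_sum_antidiagonal hg.of_norm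
    (summable_mul_of_summable_norm hf hg)

end CauchyProduct

section GeneratingFunction

variable {ι : Type*} [Fintype ι]

theorem prod_pow_add {M : Type*} [CommMonoid M] (x : ι → M) (a b : ι → ℕ) :
    ∏ k, x k ^ (a + b) k = (∏ k, x k ^ a k) * ∏ k, x k ^ b k := by
  simp only [Pi.add_apply, pow_add, prod_mul_distrib]

theorem prod_pow_single {M : Type*} [CommMonoid M] [DecidableEq ι] (x : ι → M) (i : ι) :
    ∏ k, x k ^ (Pi.single i 1 : ι → ℕ) k = x i := by
  rw [Fintype.prod_eq_single i fun k hk => by rw [Pi.single_eq_of_ne hk, pow_zero],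
    Pi.single_eq_same, pow_one]

theorem abs_prod_pow_le_one {lam : ι → ℝ} (hlam : ∀ k, |lam k| ≤ 1) (n : ι → ℕ) :
    |∏ k, lam k ^ n k| ≤ 1 := by
  rw [abs_prod]
  exact prod_le_one (fun _ _ => abs_nonneg _)
    fun k _ => (abs_pow _ _).trans_le (pow_le_one₀ (abs_nonneg _) (hlam k))

noncomputable def genFun (lam : ι → ℝ) (f : (ι → ℕ) → ℝ) : ℝ :=
  ∑' n, f n * ∏ k, lam k ^ n k

theorem genFun_one (f : (ι → ℕ) → ℝ) : genFun 1 f = ∑' n, f n := by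
  simp [genFun]

variable {lam : ι → ℝ} {f g : (ι → ℕ) → ℝ}

theorem summable_norm_mul_prod_pow (hlam : ∀ k, |lam k| ≤ 1) (hf : Summable fun n => |f n|) :
    Summable fun n => ‖f n * ∏ k, lam k ^ n k‖ := by
  refine hf.of_nonneg_of_le (fun _ => norm_nonneg _) fun n => ?_
  rw [norm_mul, Real.norm_eq_abs, Real.norm_eq_abs]
  exact mul_le_of_le_one_right (abs_nonneg _) (abs_prod_pow_le_one hlam n)

variable [DecidableEq ι]

theorem sum_Iic_mul_mul_prod_pow (n : ι → ℕ) :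
    (∑ m ∈ Iic n, f m * g (n - m)) * ∏ k, lam k ^ n k
      = ∑ m ∈ Iic n, (f m * ∏ k, lam k ^ m k) * (g (n - m) * ∏ k, lam k ^ (n - m) k) := by
  rw [sum_mul]
  refine sum_congr rfl fun m hm => ?_
  have hsplit : ∏ k, lam k ^ n k = (∏ k, lam k ^ m k) * ∏ k, lam k ^ (n - m) k := by
    rw [← prod_pow_add, add_tsub_cancel_of_le (mem_Iic.mp hm)]
  rw [hsplit]
  ring

theorem summable_sum_Iic_mul_mul_prod_pow (hlam : ∀ k, |lam k| ≤ 1)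
    (hf : Summable fun n => |f n|) (hg : Summable fun n => |g n|) :
    Summable fun n => (∑ m ∈ Iic n, f m * g (n - m)) * ∏ k, lam k ^ n k := by
  simp only [sum_Iic_mul_mul_prod_pow]
  exact summable_sum_Iic_mul_of_summable_norm (f := fun n => f n * ∏ k, lam k ^ n k)
    (g := fun n => g n * ∏ k, lam k ^ n k) (summable_norm_mul_prod_pow hlam hf)
    (summable_norm_mul_prod_pow hlam hg)

theorem genFun_sum_Iic_mul (hlam : ∀ k, |lam k| ≤ 1)
    (hf : Summable fun n => |f n|) (hg : Summable fun n => |g n|) :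
    genFun lam (fun n => ∑ m ∈ Iic n, f m * g (n - m)) = genFun lam f * genFun lam g := by
  simp only [genFun, sum_Iic_mul_mul_prod_pow]
  exact (tsum_mul_tsum_eq_tsum_sum_Iic_of_summable_norm (f := fun n => f n * ∏ k, lam k ^ n k)
    (g := fun n => g n * ∏ k, lam k ^ n k) (summable_norm_mul_prod_pow hlam hf)
    (summable_norm_mul_prod_pow hlam hg)).symm

theorem genFun_ite_single (i : ι) (a : ℝ) :
    genFun lam (fun n => if n = Pi.single i 1 then a else 0) = a * lam i := by
  simp only [genFun, ite_mul, zero_mul, tsum_ite_eq, prod_pow_single]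

end GeneratingFunction

theorem riccati_rhs_eq {ι : Type*} (s : Finset ι) (i : ι) (a c : ℝ) (β D : ι → ℝ)
    (w : ι → ι → ℝ) (hc : c ≠ 0) (hβ : ∀ j, β j ≠ 0) :
    c * a * β i * ((1 / 2) * (1 + D i / (c * β i)) ^ 2 + 1 / 2 - (1 + D i / (c * β i)))
        + ∑ j ∈ s, (β j / β i * w j i * (1 + D j / (c * β j)) - w i j * (1 + D i / (c * β i)))
        - ∑ j ∈ s, (β j / β i * w j i - w i j)
      = (a * (1 / 2) * D i ^ 2 + ∑ j ∈ s, (w j i * D j - w i j * D i)) / (c * β i) := by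
  have hβi := hβ i
  rw [add_sub_assoc, ← sum_sub_distrib, add_div, sum_div]
  congr 1
  · field_simp
    ring
  · refine sum_congr rfl fun j _ => ?_
    have hβj := hβ j
    field_simp
    ring

namespace Coagulation

variable {d : ℕ} {α : Fin d → ℝ} {w : Fin d → Fin d → ℝ} {u : ℝ → Fin d → (Fin d → ℕ) → ℝ}
  {t : ℝ} {lam : Fin d → ℝ}

theorem genFun_coagRHS (hlam : ∀ k, |lam k| ≤ 1) (habs : ∀ j, Summable fun n => |u t j n|)
    (i : Fin d) :
    genFun lam (coagRHS d α w u t i)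
      = α i * ((1 / 2) * genFun lam (u t i) ^ 2 - (∑' n, u t i n) * genFun lam (u t i))
        + ∑ j ∈ univ.erase i, (w j i * genFun lam (u t j) - w i j * genFun lam (u t i)) := by
  have hG : ∀ j, HasSum (fun n => u t j n * ∏ k, lam k ^ n k) (genFun lam (u t j)) :=
    fun j => (summable_norm_mul_prod_pow hlam (habs j)).of_norm.hasSum
  have hconv : HasSum (fun n => (∑ m ∈ Iic n, u t i m * u t i (n - m)) * ∏ k, lam k ^ n k)
      (genFun lam (u t i) ^ 2) := by
    rw [sq, ← genFun_sum_Iic_mul hlam (habs i) (habs i)]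
    exact (summable_sum_Iic_mul_mul_prod_pow hlam (habs i) (habs i)).hasSum
  refine HasSum.tsum_eq <| HasSum.congr_fun
    ((((hconv.mul_left (1 / 2)).sub ((hG i).mul_left (∑' n, u t i n))).mul_left (α i)).add
      (hasSum_sum fun j _ => ((hG j).mul_left (w j i)).sub ((hG i).mul_left (w i j)))) fun n => ?_
  rw [coagRHS, add_mul, sum_mul]
  congr 1
  · ring
  · exact sum_congr rfl fun j _ => by ring

theorem genFun_sub_tsum_coagRHS (hlam : ∀ k, |lam k| ≤ 1)
    (habs : ∀ j, Summable fun n => |u t j n|) (i : Fin d) :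
    genFun lam (coagRHS d α w u t i) - ∑' n, coagRHS d α w u t i n
      = α i * (1 / 2) * (genFun lam (u t i) - ∑' n, u t i n) ^ 2
        + ∑ j ∈ univ.erase i, (w j i * (genFun lam (u t j) - ∑' n, u t j n)
          - w i j * (genFun lam (u t i) - ∑' n, u t i n)) := by
  have hone : ∀ k, |(1 : Fin d → ℝ) k| ≤ 1 := fun k => by simp
  rw [← genFun_one, genFun_coagRHS hlam habs, genFun_coagRHS hone habs]
  simp only [genFun_one]
  rw [add_sub_add_comm, ← sum_sub_distrib]
  congr 1
  · ring
  · exact sum_congr rfl fun j _ => by ring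

theorem genV_eq (c : ℝ) (β : Fin d → ℝ) (i : Fin d) :
    genV d c β lam u t i = 1 + (genFun lam (u t i) - ∑' n, u t i n) / (c * β i) := by
  rw [genV, genFun]
  ring

end Coagulation

open Coagulation

theorem stmt_11_general (d : ℕ)
    (α β : Fin d → ℝ) (hβ : ∀ i, 0 < β i)
    (c : ℝ) (hc : 0 < c)
    (w : Fin d → Fin d → ℝ)
    (lam : Fin d → ℝ) (hlam : ∀ i, lam i ∈ Set.Icc (0 : ℝ) 1)
    (u : ℝ → Fin d → (Fin d → ℕ) → ℝ)
    (hinit : ∀ i n, u 0 i n = if n = Pi.single i 1 then c * β i else 0)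
    (habs : ∀ t ≥ (0 : ℝ), ∀ i, Summable fun n : Fin d → ℕ => |u t i n|)
    (hmass : ∀ t ≥ (0 : ℝ), ∀ i,
      HasDerivWithinAt (fun s => ∑' n : Fin d → ℕ, u s i n)
        (∑' n : Fin d → ℕ, coagRHS d α w u t i n) (Set.Ici 0) t)
    (hgen : ∀ t ≥ (0 : ℝ), ∀ i,
      HasDerivWithinAt (fun s => ∑' n : Fin d → ℕ, u s i n * ∏ k, lam k ^ n k)
        (∑' n : Fin d → ℕ, coagRHS d α w u t i n * ∏ k, lam k ^ n k)
        (Set.Ici 0) t) :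
    ∀ i, genV d c β lam u 0 i = lam i
      ∧ ∀ t ≥ (0 : ℝ),
        HasDerivWithinAt (fun s => genV d c β lam u s i)
          (c * α i * β i * ((1 / 2) * genV d c β lam u t i ^ 2 + 1 / 2
              - genV d c β lam u t i)
            + ∑ j ∈ Finset.univ.erase i,
                (β j / β i * w j i * genV d c β lam u t j
                  - w i j * genV d c β lam u t i)
            - ∑ j ∈ Finset.univ.erase i, (β j / β i * w j i - w i j))
          (Set.Ici 0) t := by
  have hlam1 : ∀ k, |lam k| ≤ 1 := fun k => (abs_of_nonneg (hlam k).1).trans_le (hlam k).2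
  intro i
  refine ⟨?_, fun t ht => ?_⟩
  · have hu0 : u 0 i = fun n => if n = Pi.single i 1 then c * β i else 0 := funext (hinit i)
    have hβi := (hβ i).ne'
    rw [genV_eq, ← genFun_one, hu0, genFun_ite_single, genFun_ite_single, Pi.one_apply]
    field_simp
    ring
  · simp only [genV_eq]
    rw [riccati_rhs_eq _ i (α i) c β (fun j => genFun lam (u t j) - ∑' n, u t j n) w hc.ne'
        fun j => (hβ j).ne',
      ← genFun_sub_tsum_coagRHS hlam1 (habs t ht)]
    exact (((hgen t ht i).sub (hmass t ht i)).div_const _).const_add 1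

/-- If `u` solves the discrete coagulation system with initial condition
`uᵢ(0,n) = cβᵢ δ_{eᵢ,n}` and all sums converge absolutely (with termwise
differentiation of the sums being valid), then for `λ ∈ [0,1]^d` the
generating-function quantities `vᵢ` satisfy
`∂ₜvᵢ = cαᵢβᵢ((1/2)vᵢ² + 1/2 - vᵢ) + Σ_{j≠i}((βⱼ/βᵢ)w_{j,i}vⱼ - w_{i,j}vᵢ)
  - Σ_{j≠i}((βⱼ/βᵢ)w_{j,i} - w_{i,j})`, with `vᵢ(0,λ) = λᵢ`. -/
theorem stmt_11 (d : ℕ) (hd : 1 ≤ d)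
    (α β : Fin d → ℝ) (hα : ∀ i, 0 < α i) (hβ : ∀ i, 0 < β i)
    (c : ℝ) (hc : 0 < c)
    (w : Fin d → Fin d → ℝ) (hw : ∀ i j, i ≠ j → 0 ≤ w i j)
    (lam : Fin d → ℝ) (hlam : ∀ i, lam i ∈ Set.Icc (0 : ℝ) 1)
    (u : ℝ → Fin d → (Fin d → ℕ) → ℝ)
    (hzero : ∀ t i, u t i 0 = 0)
    (hinit : ∀ i n, u 0 i n = if n = Pi.single i 1 then c * β i else 0)
    (habs : ∀ t ≥ (0 : ℝ), ∀ i, Summable fun n : Fin d → ℕ => |u t i n|)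
    (hode : ∀ t ≥ (0 : ℝ), ∀ i n,
      HasDerivWithinAt (fun s => u s i n) (coagRHS d α w u t i n) (Set.Ici 0) t)
    (hmass : ∀ t ≥ (0 : ℝ), ∀ i,
      HasDerivWithinAt (fun s => ∑' n : Fin d → ℕ, u s i n)
        (∑' n : Fin d → ℕ, coagRHS d α w u t i n) (Set.Ici 0) t)
    (hgen : ∀ t ≥ (0 : ℝ), ∀ i,
      HasDerivWithinAt (fun s => ∑' n : Fin d → ℕ, u s i n * ∏ k, lam k ^ n k)
        (∑' n : Fin d → ℕ, coagRHS d α w u t i n * ∏ k, lam k ^ n k)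
        (Set.Ici 0) t) :
    ∀ i, genV d c β lam u 0 i = lam i
      ∧ ∀ t ≥ (0 : ℝ),
        HasDerivWithinAt (fun s => genV d c β lam u s i)
          (c * α i * β i * ((1 / 2) * genV d c β lam u t i ^ 2 + 1 / 2
              - genV d c β lam u t i)
            + ∑ j ∈ Finset.univ.erase i,
                (β j / β i * w j i * genV d c β lam u t j
                  - w i j * genV d c β lam u t i)
            - ∑ j ∈ Finset.univ.erase i, (β j / β i * w j i - w i j))
          (Set.Ici 0) t :=
  stmt_11_general d α β hβ c hc w lam hlam u hinit habs hmass hgen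
end

section
/- Suppose that for all i ∈ [d] we are given d_i := (cα_iβ_i)/2 − Σ_{j≠i}((β_j/β_i)w_{j,i} − w_{i,j}) ≥ 0, and let v_i(t,λ) solve ∂_t v_i = (cα_iβ_i/2) v_i² + d_i − ((cα_iβ_i/2) + d_i) v_i + Σ_{j≠i} (β_j/β_i) w_{j,i}(v_j − v_i) with v_i(0,λ) = λ_i ∈ [0,1]. Then this system is identical to the backward equation of the multi-type branching process in which a type-i particle branches at rate cα_iβ_i/2, dies at rate d_i, and moves from type i to type j at rate (β_j/β_i)w_{j,i}; consequently v_i(t,λ) = E_{e_i}[λ^{Z(t)}], and 0 ≤ v_i(t,λ) ≤ 1 for all t ≥ 0. -/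
/-- Probability generating function `Σₙ p(t,a,n) λ^n` of a transition kernel `p`
on `ℕ₀^d` started from configuration `a`. -/
noncomputable def pgf (d : ℕ) (lam : Fin d → ℝ)
    (p : ℝ → (Fin d → ℕ) → (Fin d → ℕ) → ℝ) (t : ℝ) (a : Fin d → ℕ) : ℝ :=
  ∑' n : Fin d → ℕ, p t a n * ∏ k, lam k ^ n k

/-!
By the branching property the generating function `uᵢ(t) = E_{eᵢ}[λ^{Z(t)}]` of two type-`i`
particles is `uᵢ(t)²`, and started from the empty configuration it is `1`; so the backward
equation says that `u` solves the same polynomial ODE as `v`, with the same initial value `λ`.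
A polynomial vector field is locally Lipschitz, hence `v = u` by uniqueness, and `u` takes values
in `[0, 1]` as the expectation of a product of numbers in `[0, 1]`.
-/

open Set Finset

theorem ODE_solution_unique_of_locallyLipschitz_Ici {E : Type*} [NormedAddCommGroup E]
    [NormedSpace ℝ E] {F : E → E} (hF : LocallyLipschitz F) {f g : ℝ → E} {a : ℝ}
    (hf : ∀ t ≥ a, HasDerivWithinAt f (F (f t)) (Ici a) t)
    (hg : ∀ t ≥ a, HasDerivWithinAt g (F (g t)) (Ici a) t) (ha : f a = g a) :
    EqOn f g (Ici a) := by
  intro T hT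
  have hcont : ∀ h : ℝ → E, (∀ t ≥ a, HasDerivWithinAt h (F (h t)) (Ici a) t) →
      ContinuousOn h (Icc a T) := fun h hh t ht =>
    (hh t ht.1).continuousWithinAt.mono Icc_subset_Ici_self
  have hfc := hcont f hf
  have hgc := hcont g hg
  -- both trajectories over `[a, T]` lie in a compact set, on which `F` is Lipschitz
  obtain ⟨K, hK⟩ := (hF.locallyLipschitzOn (s := f '' Icc a T ∪ g '' Icc a T))
    |>.exists_lipschitzOnWith_of_compact
      ((isCompact_Icc.image_of_continuousOn hfc).union (isCompact_Icc.image_of_continuousOn hgc))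
  have hderiv : ∀ h : ℝ → E, (∀ t ≥ a, HasDerivWithinAt h (F (h t)) (Ici a) t) →
      ∀ t ∈ Ico a T, HasDerivWithinAt h (F (h t)) (Ici t) t := fun h hh t ht =>
    (hh t ht.1).mono (Ici_subset_Ici.2 ht.1)
  exact ODE_solution_unique_of_mem_Icc_right (v := fun _ => F) (fun _ _ => hK) hfc
    (hderiv f hf) (fun t ht => .inl ⟨t, Ico_subset_Icc_self ht, rfl⟩) hgc
    (hderiv g hg) (fun t ht => .inr ⟨t, Ico_subset_Icc_self ht, rfl⟩) ha ⟨hT, le_rfl⟩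

section pgf

variable {d : ℕ} {lam : Fin d → ℝ} {p : ℝ → (Fin d → ℕ) → (Fin d → ℕ) → ℝ} {t : ℝ}
  {a : Fin d → ℕ}

theorem prod_pow_mem_Icc (hlam : ∀ i, lam i ∈ Icc (0 : ℝ) 1) (n : Fin d → ℕ) :
    ∏ k, lam k ^ n k ∈ Icc (0 : ℝ) 1 :=
  ⟨prod_nonneg fun k _ => pow_nonneg (hlam k).1 _,
    prod_le_one (fun k _ => pow_nonneg (hlam k).1 _)
      fun k _ => pow_le_one₀ (hlam k).1 (hlam k).2⟩

theorem pgf_mem_Icc (hlam : ∀ i, lam i ∈ Icc (0 : ℝ) 1) (hp : ∀ n, 0 ≤ p t a n)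
    (hsum : Summable (p t a)) (hmass : ∑' n, p t a n ≤ 1) : pgf d lam p t a ∈ Icc (0 : ℝ) 1 := by
  have hle : ∀ n, p t a n * ∏ k, lam k ^ n k ≤ p t a n := fun n =>
    mul_le_of_le_one_right (hp n) (prod_pow_mem_Icc hlam n).2
  have hnn : ∀ n, 0 ≤ p t a n * ∏ k, lam k ^ n k := fun n =>
    mul_nonneg (hp n) (prod_pow_mem_Icc hlam n).1
  exact ⟨tsum_nonneg hnn,
    (Summable.tsum_le_tsum hle (hsum.of_nonneg_of_le hnn hle) hsum).trans hmass⟩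

theorem pgf_of_eq_dirac (h : ∀ n, p t a n = if n = a then 1 else 0) :
    pgf d lam p t a = ∏ k, lam k ^ a k := by
  rw [pgf, tsum_eq_single a fun n hn => by simp [h, hn]]
  simp [h]

end pgf

/-- Right-hand side of the backward equation of a multi-type branching process in which a type-`i`
particle splits in two at rate `b i`, dies at rate `δ i` and turns into type `j` at rate `m i j`. -/
def branchingVectorField {d : ℕ} (b δ : Fin d → ℝ) (m : Fin d → Fin d → ℝ) (x : Fin d → ℝ)
    (i : Fin d) : ℝ :=
  b i * x i ^ 2 + δ i - (b i + δ i) * x i + ∑ j ∈ univ.erase i, m i j * (x j - x i)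

theorem branchingVectorField_apply {d : ℕ} (b δ : Fin d → ℝ) (m : Fin d → Fin d → ℝ)
    (x : Fin d → ℝ) (i : Fin d) :
    branchingVectorField b δ m x i = b i * x i ^ 2 + δ i * 1 + ∑ j ∈ univ.erase i, m i j * x j
      - (b i + δ i + ∑ j ∈ univ.erase i, m i j) * x i := by
  simp only [branchingVectorField, mul_sub, sum_sub_distrib, ← sum_mul]
  ring

theorem contDiff_branchingVectorField {d : ℕ} (b δ : Fin d → ℝ) (m : Fin d → Fin d → ℝ) :
    ContDiff ℝ 1 (branchingVectorField b δ m) := by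
  unfold branchingVectorField
  fun_prop

theorem stmt_18_general (d : ℕ)
    (α β : Fin d → ℝ)
    (c : ℝ)
    (w : Fin d → Fin d → ℝ)
    (dth : Fin d → ℝ)
    (lam : Fin d → ℝ) (hlam : ∀ i, lam i ∈ Set.Icc (0 : ℝ) 1)
    -- the branching process, encoded via its transition function
    (p : ℝ → (Fin d → ℕ) → (Fin d → ℕ) → ℝ)
    (hker_nonneg : ∀ t ≥ (0 : ℝ), ∀ a n, 0 ≤ p t a n)
    (hker_sum : ∀ t ≥ (0 : ℝ), ∀ a, Summable (p t a))
    (hker_mass : ∀ t ≥ (0 : ℝ), ∀ a, (∑' n : Fin d → ℕ, p t a n) = 1)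
    (hinit : ∀ a n, p 0 a n = if n = a then 1 else 0)
    (habsorb : ∀ t ≥ (0 : ℝ), ∀ n, p t 0 n = if n = 0 then 1 else 0)
    (hbranch : ∀ t ≥ (0 : ℝ), ∀ i,
      pgf d lam p t (Pi.single i 1 + Pi.single i 1)
        = pgf d lam p t (Pi.single i 1) ^ 2)
    (hback : ∀ t ≥ (0 : ℝ), ∀ i,
      HasDerivWithinAt (fun s => pgf d lam p s (Pi.single i 1))
        (c * α i * β i / 2 * pgf d lam p t (Pi.single i 1 + Pi.single i 1)
          + dth i * pgf d lam p t 0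
          + (∑ j ∈ Finset.univ.erase i,
              β j / β i * w j i * pgf d lam p t (Pi.single j 1))
          - (c * α i * β i / 2 + dth i
              + ∑ j ∈ Finset.univ.erase i, β j / β i * w j i)
              * pgf d lam p t (Pi.single i 1))
        (Set.Ici 0) t)
    -- the solution of the transformed coagulation system
    (v : ℝ → Fin d → ℝ)
    (hv0 : ∀ i, v 0 i = lam i)
    (hvode : ∀ t ≥ (0 : ℝ), ∀ i,
      HasDerivWithinAt (fun s => v s i)
        (c * α i * β i / 2 * v t i ^ 2 + dth i
          - (c * α i * β i / 2 + dth i) * v t i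
          + ∑ j ∈ Finset.univ.erase i, β j / β i * w j i * (v t j - v t i))
        (Set.Ici 0) t) :
    ∀ t ≥ (0 : ℝ), ∀ i,
      v t i = pgf d lam p t (Pi.single i 1)
      ∧ 0 ≤ v t i ∧ v t i ≤ 1 := by
  intro t ht i
  set u : ℝ → Fin d → ℝ := fun s j => pgf d lam p s (Pi.single j 1)
  set F := branchingVectorField (fun i => c * α i * β i / 2) dth (fun i j => β j / β i * w j i)
  have hpgf_zero : ∀ s ≥ (0 : ℝ), pgf d lam p s 0 = 1 := fun s hs => by
    simp [pgf_of_eq_dirac (habsorb s hs)]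
  have hu : ∀ s ≥ (0 : ℝ), HasDerivWithinAt u (F (u s)) (Set.Ici 0) s := fun s hs =>
    hasDerivWithinAt_pi.2 fun j => by
      simpa only [F, branchingVectorField_apply, hbranch s hs, hpgf_zero s hs] using hback s hs j
  have hu0 : u 0 = v 0 := funext fun j => by
    simp [u, hv0, pgf_of_eq_dirac (hinit _), Pi.single_apply, pow_ite]
  have hvu : v t = u t := (ODE_solution_unique_of_locallyLipschitz_Ici
    (contDiff_branchingVectorField _ _ _).locallyLipschitz
    (fun s hs => hasDerivWithinAt_pi.2 (hvode s hs)) hu hu0.symm) ht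
  rw [congrFun hvu i]
  exact ⟨rfl, pgf_mem_Icc hlam (hker_nonneg t ht _) (hker_sum t ht _) (hker_mass t ht _).le⟩

/-- Stochastic representation for the transformed critical coagulation equation:
assume `dᵢ := cαᵢβᵢ/2 - Σ_{j≠i}((βⱼ/βᵢ)w_{j,i} - w_{i,j}) ≥ 0`, and let `v` solve
`∂ₜvᵢ = (cαᵢβᵢ/2)vᵢ² + dᵢ - ((cαᵢβᵢ/2) + dᵢ)vᵢ + Σ_{j≠i}(βⱼ/βᵢ)w_{j,i}(vⱼ - vᵢ)`
with `vᵢ(0,λ) = λᵢ ∈ [0,1]`. This is the backward equation of the multi-type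
branching process in which a type-`i` particle branches at rate `cαᵢβᵢ/2`, dies
at rate `dᵢ`, and moves from type `i` to `j` at rate `(βⱼ/βᵢ)w_{j,i}` (the
process being encoded by its transition function `p`, satisfying the backward
equation, absorption at `0` and the branching property); consequently
`vᵢ(t,λ) = E_{eᵢ}[λ^{Z(t)}]`, and `0 ≤ vᵢ(t,λ) ≤ 1` for all `t ≥ 0`. -/
theorem stmt_18 (d : ℕ) (hd : 1 ≤ d)
    (α β : Fin d → ℝ) (hα : ∀ i, 0 < α i) (hβ : ∀ i, 0 < β i)
    (c : ℝ) (hc : 0 < c)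
    (w : Fin d → Fin d → ℝ) (hw : ∀ i j, i ≠ j → 0 ≤ w i j)
    (dth : Fin d → ℝ)
    (hdth : ∀ i, dth i = c * α i * β i / 2
      - ∑ j ∈ Finset.univ.erase i, (β j / β i * w j i - w i j))
    (hdnn : ∀ i, 0 ≤ dth i)
    (lam : Fin d → ℝ) (hlam : ∀ i, lam i ∈ Set.Icc (0 : ℝ) 1)
    -- the branching process, encoded via its transition function
    (p : ℝ → (Fin d → ℕ) → (Fin d → ℕ) → ℝ)
    (hker_nonneg : ∀ t ≥ (0 : ℝ), ∀ a n, 0 ≤ p t a n)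
    (hker_sum : ∀ t ≥ (0 : ℝ), ∀ a, Summable (p t a))
    (hker_mass : ∀ t ≥ (0 : ℝ), ∀ a, (∑' n : Fin d → ℕ, p t a n) = 1)
    (hinit : ∀ a n, p 0 a n = if n = a then 1 else 0)
    (habsorb : ∀ t ≥ (0 : ℝ), ∀ n, p t 0 n = if n = 0 then 1 else 0)
    (hbranch : ∀ t ≥ (0 : ℝ), ∀ i,
      pgf d lam p t (Pi.single i 1 + Pi.single i 1)
        = pgf d lam p t (Pi.single i 1) ^ 2)
    (hback : ∀ t ≥ (0 : ℝ), ∀ i,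
      HasDerivWithinAt (fun s => pgf d lam p s (Pi.single i 1))
        (c * α i * β i / 2 * pgf d lam p t (Pi.single i 1 + Pi.single i 1)
          + dth i * pgf d lam p t 0
          + (∑ j ∈ Finset.univ.erase i,
              β j / β i * w j i * pgf d lam p t (Pi.single j 1))
          - (c * α i * β i / 2 + dth i
              + ∑ j ∈ Finset.univ.erase i, β j / β i * w j i)
              * pgf d lam p t (Pi.single i 1))
        (Set.Ici 0) t)
    -- the solution of the transformed coagulation system
    (v : ℝ → Fin d → ℝ)
    (hv0 : ∀ i, v 0 i = lam i)
    (hvode : ∀ t ≥ (0 : ℝ), ∀ i,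
      HasDerivWithinAt (fun s => v s i)
        (c * α i * β i / 2 * v t i ^ 2 + dth i
          - (c * α i * β i / 2 + dth i) * v t i
          + ∑ j ∈ Finset.univ.erase i, β j / β i * w j i * (v t j - v t i))
        (Set.Ici 0) t) :
    ∀ t ≥ (0 : ℝ), ∀ i,
      v t i = pgf d lam p t (Pi.single i 1)
      ∧ 0 ≤ v t i ∧ v t i ≤ 1 :=
  stmt_18_general d α β c w dth lam hlam p hker_nonneg hker_sum hker_mass hinit habsorb hbranch
    hback v hv0 hvode
end
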